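/- For integers k ≥ 0 and n ≥ l ≥ k+1, the number op_{n,≥k,≤l} of ordered preference sets (a_1,…,a_n) of length n with at least k flaws satisfying a_i ≤ l for all i equals C(n+l−1, l−k−1). -/

import Mathlib

/-- The first unoccupied parking space `j` with `p ≤ j ≤ n`, if any. -/
def firstFree (n : ℕ) (occ : Finset ℕ) (p : ℕ) : Option ℕ :=
  (List.range' p (n + 1 - p)).find? (fun j => decide (j ∉ occ))

/-- Number of cars that fail to park, processing the preference list in order,
given the set of already occupied spaces. -/
def flawsFrom (n : ℕ) : List ℕ → Finset ℕ → ℕ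
  | [], _ => 0
  | p :: rest, occ =>
    match firstFree n occ p with
    | none => flawsFrom n rest occ + 1
    | some j => flawsFrom n rest (insert j occ)

/-- The number of flaws (unparked cars) of a preference list of length `n`. -/
def flaws (n : ℕ) (a : List ℕ) : ℕ := flawsFrom n a ∅

/-- A preference set of length `n`: a list of length `n` with entries in `{1, …, n}`. -/
def IsPrefSet (n : ℕ) (a : List ℕ) : Prop :=
  a.length = n ∧ ∀ x ∈ a, 1 ≤ x ∧ x ≤ n

/-- An ordered preference set of length `n`: a nondecreasing preference set. -/
def IsOrderedPrefSet (n : ℕ) (a : List ℕ) : Prop :=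
  IsPrefSet n a ∧ a.Pairwise (· ≤ ·)

/-- `op_{n,≥k}`: number of ordered preference sets of length `n` with at least `k` flaws. -/
noncomputable def opGe (n k : ℕ) : ℕ :=
  {a : List ℕ | IsOrderedPrefSet n a ∧ k ≤ flaws n a}.ncard

/-- `op_{n,≤k}`: number of ordered preference sets of length `n` with at most `k` flaws. -/
noncomputable def opLe (n k : ℕ) : ℕ :=
  {a : List ℕ | IsOrderedPrefSet n a ∧ flaws n a ≤ k}.ncard

/-- `op_{n,k}`: number of ordered preference sets of length `n` with exactly `k` flaws. -/
noncomputable def opEq (n k : ℕ) : ℕ :=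
  {a : List ℕ | IsOrderedPrefSet n a ∧ flaws n a = k}.ncard

/-- `op_{n,≥k,≤l}`: at least `k` flaws, every entry at most `l`. -/
noncomputable def opGeLe (n k l : ℕ) : ℕ :=
  {a : List ℕ | IsOrderedPrefSet n a ∧ k ≤ flaws n a ∧ ∀ x ∈ a, x ≤ l}.ncard

/-- `op_{n,≥k,≤l}^m`: at least `k` flaws, every entry at most `l`, leading term `m`. -/
noncomputable def opGeLeLead (n k l m : ℕ) : ℕ :=
  {a : List ℕ | IsOrderedPrefSet n a ∧ k ≤ flaws n a ∧ (∀ x ∈ a, x ≤ l) ∧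
    a.head? = some m}.ncard

/-- `op_{n,k,≤l}^m`: exactly `k` flaws, every entry at most `l`, leading term `m`. -/
noncomputable def opEqLeLead (n k l m : ℕ) : ℕ :=
  {a : List ℕ | IsOrderedPrefSet n a ∧ flaws n a = k ∧ (∀ x ∈ a, x ≤ l) ∧
    a.head? = some m}.ncard

/-- `op_{n,k}^m`: exactly `k` flaws, leading term `m`. -/
noncomputable def opLead (n k m : ℕ) : ℕ :=
  {a : List ℕ | IsOrderedPrefSet n a ∧ flaws n a = k ∧ a.head? = some m}.ncard

/-- `op_{n,k,=l}^m`: exactly `k` flaws, maximal entry exactly `l`, leading term `m`. -/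
noncomputable def opMaxLead (n k l m : ℕ) : ℕ :=
  {a : List ℕ | IsOrderedPrefSet n a ∧ flaws n a = k ∧ (∀ x ∈ a, x ≤ l) ∧ l ∈ a ∧
    a.head? = some m}.ncard

/-- Binomial coefficient `C(a, b)` with an integer lower index, which is `0`
when `b < 0` (the standard convention). -/
def chooseInt (a : ℕ) (b : ℤ) : ℕ := if 0 ≤ b then a.choose b.toNat else 0

/-!
For nondecreasing preferences the occupied spaces above the next preference always form an
interval ending at the last car's space, so each car parks at `max (r + 1) aᵢ`. On an unbounded
street the last occupied space would be `max_j (a_j + n - j)`, and the flaws are exactly the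
overflow of this quantity beyond `n`. The lists with entries in `[1, l]` that reach `n + k`
satisfy Pascal's recurrence: either the first entry is `1` (drop it: `n` falls and `k` rises by
one) or all entries are at least `2` (subtract `1` from each: `l` and `k` fall by one).
-/

/-- For nondecreasing preferences, the last space occupied when the cars park on an unbounded
street: the cars from the one preferring `x` on fill a block of consecutive spaces. -/
def lastSpot : List ℕ → ℕ
  | [] => 0
  | x :: M => max (x + M.length) (lastSpot M)

@[simp]
lemma lastSpot_nil : lastSpot [] = 0 := rfl

@[simp]
lemma lastSpot_cons (x : ℕ) (M : List ℕ) :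
    lastSpot (x :: M) = max (x + M.length) (lastSpot M) := rfl

lemma lastSpot_le {l : ℕ} : ∀ {L : List ℕ}, (∀ x ∈ L, x ≤ l) →
    lastSpot L ≤ l + L.length - 1
  | [], _ => Nat.zero_le _
  | x :: M, h => by
    have := lastSpot_le (L := M) fun y hy => h y (List.mem_cons_of_mem x hy)
    have := h x List.mem_cons_self
    simp only [lastSpot_cons, List.length_cons]
    omega

lemma length_le_lastSpot : ∀ {L : List ℕ}, (∀ x ∈ L, 1 ≤ x) → L.length ≤ lastSpot L
  | [], _ => le_rfl
  | x :: M, h => by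
    have := h x List.mem_cons_self
    simp only [lastSpot_cons, List.length_cons]
    omega

lemma lastSpot_map_add_one : ∀ {L : List ℕ}, L ≠ [] →
    lastSpot (L.map (· + 1)) = lastSpot L + 1
  | [x], _ => by simp
  | x :: y :: M, _ => by
    have := lastSpot_map_add_one (L := y :: M) (List.cons_ne_nil y M)
    simp only [List.map_cons, lastSpot_cons, List.length_map, List.length_cons] at this ⊢
    omega

lemma find?_range'_eq_of_threshold (P : ℕ → Bool) (t : ℕ) :
    ∀ {m p : ℕ}, (∀ j, p ≤ j → j < p + m → (P j ↔ t ≤ j)) →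
    (List.range' p m).find? P = if max t p < p + m then some (max t p) else none
  | 0, p, _ => by simp
  | m + 1, p, h => by
    rw [List.range'_succ, List.find?_cons]
    by_cases hp : P p
    · have := (h p le_rfl (by omega)).1 hp
      rw [hp, if_pos (by omega), show max t p = p by omega]
    · have := mt (h p le_rfl (by omega)).2 hp
      rw [Bool.not_eq_true] at hp
      rw [hp, find?_range'_eq_of_threshold P t fun j h1 h2 => h j (by omega) (by omega)]
      rw [show max t (p + 1) = max t p by omega, show p + 1 + m = p + (m + 1) by omega]

lemma firstFree_eq_of_occupied_iff {n r p : ℕ} {occ : Finset ℕ}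
    (h : ∀ j, p ≤ j → (j ∈ occ ↔ j ≤ r)) :
    firstFree n occ p = if max (r + 1) p ≤ n then some (max (r + 1) p) else none := by
  rw [firstFree, find?_range'_eq_of_threshold _ (r + 1) fun j hj _ => by
    simp only [decide_eq_true_eq, h j hj]; omega]
  exact if_congr (by omega) rfl rfl

lemma flawsFrom_eq_lastSpot_sub {n : ℕ} : ∀ {L : List ℕ} {occ : Finset ℕ} {r : ℕ},
    L.Pairwise (· ≤ ·) → (∀ x ∈ L, x ≤ n) → r ≤ n →
    (∀ x ∈ L, ∀ j, x ≤ j → (j ∈ occ ↔ j ≤ r)) →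
    flawsFrom n L occ = lastSpot (r :: L) - n
  | [], _, r, _, _, hr, _ => by
    simp only [flawsFrom, lastSpot_cons, lastSpot_nil, List.length_nil]
    omega
  | p :: L, occ, r, hsort, hle, hr, hocc => by
    obtain ⟨hpL, hsort⟩ := List.pairwise_cons.mp hsort
    have hp := hle p List.mem_cons_self
    have hle : ∀ x ∈ L, x ≤ n := fun x hx => hle x (List.mem_cons_of_mem p hx)
    have hL := lastSpot_le hle
    simp only [flawsFrom, firstFree_eq_of_occupied_iff (hocc p List.mem_cons_self)]
    split_ifs with hfree <;> dsimp only
    · have hocc' : ∀ x ∈ L, ∀ j, x ≤ j →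
          (j ∈ insert (max (r + 1) p) occ ↔ j ≤ max (r + 1) p) := fun x hx j hj => by
          have := hpL x hx
          rw [Finset.mem_insert, hocc p List.mem_cons_self j (by omega)]
          omega
      rw [flawsFrom_eq_lastSpot_sub hsort hle hfree hocc']
      simp only [lastSpot_cons, List.length_cons]
      omega
    · rw [flawsFrom_eq_lastSpot_sub hsort hle hr fun x hx => hocc x (List.mem_cons_of_mem p hx)]
      simp only [lastSpot_cons, List.length_cons]
      omega

lemma flaws_eq_lastSpot_sub {n : ℕ} {a : List ℕ} (ha : IsOrderedPrefSet n a) :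
    flaws n a = lastSpot a - n := by
  obtain ⟨⟨hlen, hbound⟩, hsort⟩ := ha
  rw [flaws, flawsFrom_eq_lastSpot_sub hsort (fun x hx => (hbound x hx).2) (Nat.zero_le n)
    fun x hx j hj => by have := (hbound x hx).1; simp only [Finset.notMem_empty, false_iff]; omega]
  simp only [lastSpot_cons, hlen]
  omega

lemma le_flaws_iff {n k : ℕ} {a : List ℕ} (ha : IsOrderedPrefSet n a) :
    k ≤ flaws n a ↔ n + k ≤ lastSpot a := by
  have := ha.1.1 ▸ length_le_lastSpot fun x hx => (ha.1.2 x hx).1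
  rw [flaws_eq_lastSpot_sub ha]
  omega

def sortedLists (n l : ℕ) : Set (List ℕ) :=
  {a | a.Pairwise (· ≤ ·) ∧ a.length = n ∧ ∀ x ∈ a, 1 ≤ x ∧ x ≤ l}

lemma sortedLists_zero_left (l : ℕ) : sortedLists 0 l = {[]} := by
  ext a
  refine ⟨fun ⟨_, hlen, _⟩ => List.length_eq_zero_iff.mp hlen, ?_⟩
  rintro rfl
  simp [sortedLists]

lemma sortedLists_zero_right (n : ℕ) : sortedLists (n + 1) 0 = ∅ :=
  Set.eq_empty_of_forall_notMem fun a ⟨_, hlen, hb⟩ => by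
    obtain ⟨x, t, rfl⟩ := List.exists_cons_of_length_eq_add_one hlen
    have := hb x List.mem_cons_self
    omega

lemma cons_mem_sortedLists {n l x : ℕ} {t : List ℕ} :
    x :: t ∈ sortedLists (n + 1) l ↔
      (∀ y ∈ t, x ≤ y) ∧ 1 ≤ x ∧ x ≤ l ∧ t ∈ sortedLists n l := by
  simp only [sortedLists, Set.mem_ofPred_eq, List.pairwise_cons, List.length_cons,
    Nat.add_right_cancel_iff, List.mem_cons, forall_eq_or_imp]
  tauto

lemma mem_image_map_succ_sortedLists {n l : ℕ} {a : List ℕ} :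
    a ∈ List.map (· + 1) '' sortedLists n l ↔
      a ∈ sortedLists n (l + 1) ∧ ∀ x ∈ a, 2 ≤ x := by
  constructor
  · rintro ⟨b, ⟨hsort, hlen, hb⟩, rfl⟩
    refine ⟨⟨hsort.map _ fun _ _ h => by omega, by simpa using hlen, ?_⟩, ?_⟩ <;>
    · simp only [List.mem_map]
      rintro _ ⟨y, hy, rfl⟩
      have := hb y hy
      omega
  · rintro ⟨⟨hsort, hlen, ha⟩, h2⟩
    refine ⟨a.map (· - 1),
      ⟨hsort.map _ fun _ _ h => by omega, by simpa using hlen, ?_⟩, ?_⟩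
    · simp only [List.mem_map]
      rintro _ ⟨y, hy, rfl⟩
      have := ha y hy
      have := h2 y hy
      omega
    · rw [List.map_map]
      refine List.map_congr_left (fun x hx => ?_) |>.trans a.map_id
      have := h2 x hx
      simp only [Function.comp_apply, id_eq]
      omega

lemma sortedLists_succ_succ_sep (n l : ℕ) (P : List ℕ → Prop) :
    {a ∈ sortedLists (n + 1) (l + 1) | P a} =
      List.cons 1 '' {t ∈ sortedLists n (l + 1) | P (1 :: t)} ∪
        List.map (· + 1) '' {b ∈ sortedLists (n + 1) l | P (b.map (· + 1))} := by
  ext a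
  constructor
  · rintro ⟨ha, hP⟩
    obtain ⟨x, t, rfl⟩ := List.exists_cons_of_length_eq_add_one ha.2.1
    obtain ⟨hxt, hx, -, ht⟩ := cons_mem_sortedLists.mp ha
    by_cases hx1 : x = 1
    · subst hx1
      exact Or.inl ⟨t, ⟨ht, hP⟩, rfl⟩
    · have h2 : ∀ y ∈ x :: t, 2 ≤ y := by
        simp only [List.mem_cons, forall_eq_or_imp]
        exact ⟨by omega, fun y hy => by have := hxt y hy; omega⟩
      obtain ⟨b, hb, hbxt⟩ := mem_image_map_succ_sortedLists.mpr ⟨ha, h2⟩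
      exact Or.inr ⟨b, ⟨hb, hbxt ▸ hP⟩, hbxt⟩
  · rintro (⟨t, ⟨ht, hP⟩, rfl⟩ | ⟨b, ⟨hb, hP⟩, rfl⟩)
    · exact ⟨cons_mem_sortedLists.mpr ⟨fun y hy => (ht.2.2 y hy).1, le_rfl, by omega, ht⟩,
        hP⟩
    · exact ⟨(mem_image_map_succ_sortedLists.mp ⟨b, hb, rfl⟩).1, hP⟩

lemma encard_sortedLists_succ_succ_sep (n l : ℕ) (P : List ℕ → Prop) :
    {a ∈ sortedLists (n + 1) (l + 1) | P a}.encard =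
      {t ∈ sortedLists n (l + 1) | P (1 :: t)}.encard +
        {b ∈ sortedLists (n + 1) l | P (b.map (· + 1))}.encard := by
  rw [sortedLists_succ_succ_sep, Set.encard_union_eq, List.cons_injective.encard_image,
    (List.map_injective_iff.mpr (add_left_injective 1)).encard_image]
  rw [Set.disjoint_left]
  rintro _ ⟨t, -, rfl⟩ hb
  have := (mem_image_map_succ_sortedLists.mp (Set.image_mono (Set.sep_subset _ _) hb)).2 1
  simp at this

lemma encard_sortedLists (n l : ℕ) : (sortedLists n l).encard = l.multichoose n := by
  induction n generalizing l with
  | zero => simp [sortedLists_zero_left]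
  | succ n ihn =>
    induction l with
    | zero => simp [sortedLists_zero_right]
    | succ l ihl =>
      have := encard_sortedLists_succ_succ_sep n l fun _ => True
      simp only [Set.sep_true] at this
      rw [this, ihn, ihl, Nat.multichoose_succ_succ]
      push_cast
      ring

theorem encard_sortedLists_sep_le_lastSpot {n k m : ℕ} (hmn : m < n) :
    {a ∈ sortedLists n (k + 1 + m) | n + k ≤ lastSpot a}.encard = (n + k + m).choose m := by
  induction n generalizing k m with
  | zero => omega
  | succ n ihn =>
    induction k with
    | zero =>
      rw [Set.sep_eq_self_iff_mem_true.mpr fun a ha =>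
          ha.2.1 ▸ length_le_lastSpot fun x hx => (ha.2.2 x hx).1,
        encard_sortedLists, Nat.multichoose_eq,
        show 0 + 1 + m + (n + 1) - 1 = n + 1 + m by omega, Nat.choose_symm_add]
    | succ k ihk =>
      rw [show k + 1 + 1 + m = k + 1 + m + 1 by omega, encard_sortedLists_succ_succ_sep]
      have hcons : {t ∈ sortedLists n (k + 1 + m + 1) | n + 1 + (k + 1) ≤ lastSpot (1 :: t)} =
          {t ∈ sortedLists n (k + 1 + m + 1) | n + (k + 2) ≤ lastSpot t} :=
        Set.sep_ext_iff.mpr fun t ht => by rw [lastSpot_cons, ht.2.1]; omega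
      have hmap : {b ∈ sortedLists (n + 1) (k + 1 + m) |
            n + 1 + (k + 1) ≤ lastSpot (b.map (· + 1))} =
          {b ∈ sortedLists (n + 1) (k + 1 + m) | n + 1 + k ≤ lastSpot b} :=
        Set.sep_ext_iff.mpr fun b hb => by
          rw [lastSpot_map_add_one (List.ne_nil_of_length_eq_add_one hb.2.1)]; omega
      rw [hcons, hmap, ihk]
      rcases m with _ | m
      · rw [Set.sep_eq_empty_iff_mem_false.mpr fun t ht => ?_]
        · simp
        · have := lastSpot_le fun x hx => (ht.2.2 x hx).2
          rw [ht.2.1] at this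
          omega
      · rw [show k + 1 + (m + 1) + 1 = k + 2 + 1 + m by omega, ihn (by omega),
          show n + 1 + (k + 1) + (m + 1) = n + (k + 2) + m + 1 by omega, Nat.choose_succ_succ',
          show n + 1 + k + (m + 1) = n + (k + 2) + m by omega]
        push_cast
        rfl

theorem stmt5 (n k l : ℕ) (hl : k + 1 ≤ l) (hn : l ≤ n) :
    opGeLe n k l = Nat.choose (n + l - 1) (l - k - 1) := by
  obtain ⟨m, rfl⟩ := Nat.exists_eq_add_of_le hl
  have hset : {a | IsOrderedPrefSet n a ∧ k ≤ flaws n a ∧ ∀ x ∈ a, x ≤ k + 1 + m} =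
      {a ∈ sortedLists n (k + 1 + m) | n + k ≤ lastSpot a} := by
    ext a
    constructor
    · rintro ⟨ha, hk, hle⟩
      exact ⟨⟨ha.2, ha.1.1, fun x hx => ⟨(ha.1.2 x hx).1, hle x hx⟩⟩,
        (le_flaws_iff ha).mp hk⟩
    · rintro ⟨⟨hsort, hlen, hb⟩, hk⟩
      have ha : IsOrderedPrefSet n a :=
        ⟨⟨hlen, fun x hx => ⟨(hb x hx).1, (hb x hx).2.trans hn⟩⟩, hsort⟩
      exact ⟨ha, (le_flaws_iff ha).mpr hk, fun x hx => (hb x hx).2⟩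
  rw [opGeLe, hset, Set.ncard_def, encard_sortedLists_sep_le_lastSpot (by omega),
    ENat.toNat_natCast]
  congr 1 <;> omega
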